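/- Let ℓ, ℓ', m, n be nonnegative integers with m ≤ ℓ and n ≤ ℓ'. Then ((ℓ+ℓ'+2)/(ℓ+1)) · m(m+1)/2 + ((ℓ+ℓ'+2)/(ℓ'+1)) · n(n+1)/2 + (ℓ+ℓ'+2)/2 ≥ (m+n+1)(m+n+2)/2. -/

import Mathlib

/-! With `a = ℓ + 1`, `b = ℓ' + 1`, `p = a - 1 - m ≥ 0` and `q = b - 1 - n ≥ 0`, clearing the
denominator `2ab` turns the difference of the two sides into `(b p - a q)² + b² p + a² q`. -/

theorem cleared_defect_eq {R : Type*} [CommRing R] (a b m n : R) :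
    (a + b) * (b * (m * (m + 1)) + a * (n * (n + 1)) + a * b)
        - a * b * ((m + n + 1) * (m + n + 2)) =
      (b * (a - 1 - m) - a * (b - 1 - n)) ^ 2 + b ^ 2 * (a - 1 - m) + a ^ 2 * (b - 1 - n) := by
  ring

theorem triangular_add_le_weighted {K : Type*} [Field K] [LinearOrder K] [IsStrictOrderedRing K]
    {a b m n : K} (ha : 0 < a) (hb : 0 < b) (hm : m + 1 ≤ a) (hn : n + 1 ≤ b) :
    (m + n + 1) * (m + n + 2) / 2 ≤
      (a + b) / a * (m * (m + 1) / 2) + (a + b) / b * (n * (n + 1) / 2) + (a + b) / 2 := by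
  have hdiff : (a + b) / a * (m * (m + 1) / 2) + (a + b) / b * (n * (n + 1) / 2) + (a + b) / 2
        - (m + n + 1) * (m + n + 2) / 2 =
      ((a + b) * (b * (m * (m + 1)) + a * (n * (n + 1)) + a * b)
        - a * b * ((m + n + 1) * (m + n + 2))) / (2 * a * b) := by
    field_simp
  have hcleared : 0 ≤ (a + b) * (b * (m * (m + 1)) + a * (n * (n + 1)) + a * b)
      - a * b * ((m + n + 1) * (m + n + 2)) := by
    rw [cleared_defect_eq]
    have hp : 0 ≤ a - 1 - m := by linarith
    have hq : 0 ≤ b - 1 - n := by linarith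
    positivity
  rw [← sub_nonneg, hdiff]
  positivity

theorem stmt_16 (l l' m n : ℕ) (hm : m ≤ l) (hn : n ≤ l') :
    ((m : ℝ) + n + 1) * ((m : ℝ) + n + 2) / 2 ≤
      (((l : ℝ) + l' + 2) / ((l : ℝ) + 1)) * ((m : ℝ) * ((m : ℝ) + 1) / 2) +
        (((l : ℝ) + l' + 2) / ((l' : ℝ) + 1)) * ((n : ℝ) * ((n : ℝ) + 1) / 2) +
        ((l : ℝ) + l' + 2) / 2 := by
  rw [show (l : ℝ) + l' + 2 = (l + 1) + (l' + 1) by ring]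
  exact triangular_add_le_weighted (by positivity) (by positivity)
    (by simpa using hm) (by simpa using hn)
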